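/- arXiv:2312.13185 — 2 statements merged into one kernel-verified Lean document; each statement's English description precedes it below -/
import Mathlib

section
/- For every finite simple graph G on vertex set Fin N, the subgroup S_G of the group of invertible 2^N × 2^N complex matrices generated by the stabilizer generators {K_v := X_v · ∏_{w ∈ N_G(v)} Z_w : v ∈ Fin N} has exactly 2^N elements, and the rank-one projector onto the graph state |G⟩ := (∏_{{i,j} ∈ E(G)} CZ_{i,j}) |+⟩^{⊗N} satisfies |G⟩⟨G| = (1/2^N) · ∑_{S ∈ S_G} S. -/
open Matrix Complex
open scoped Kronecker Classical

noncomputable section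

namespace QCA

/-- Computational-basis index set of an `N`-qubit register. -/
abbrev QIdx (N : ℕ) := Fin N → Fin 2

/-- Operators (matrices) on an `N`-qubit register `(ℂ²)^{⊗N}`. -/
abbrev MatQ (N : ℕ) := Matrix (QIdx N) (QIdx N) ℂ

/-- Pauli X. -/
def Xg : Matrix (Fin 2) (Fin 2) ℂ := !![0, 1; 1, 0]

/-- Pauli Z. -/
def Zg : Matrix (Fin 2) (Fin 2) ℂ := !![1, 0; 0, -1]

/-- Pauli Y = i·X·Z. -/
def Yg : Matrix (Fin 2) (Fin 2) ℂ := Complex.I • (Xg * Zg)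

/-- Hadamard gate. -/
def Hg : Matrix (Fin 2) (Fin 2) ℂ := (Real.sqrt 2 : ℂ)⁻¹ • !![1, 1; 1, -1]

/-- Phase gate S = diag(1, i). -/
def Sg : Matrix (Fin 2) (Fin 2) ℂ := !![1, 0; 0, Complex.I]

/-- √X := H·S·H. -/
def sqrtXg : Matrix (Fin 2) (Fin 2) ℂ := Hg * Sg * Hg

/-- The ket |+⟩ = (|0⟩+|1⟩)/√2. -/
def ketPlus : Fin 2 → ℂ := fun _ => (Real.sqrt 2 : ℂ)⁻¹

/-- The bra ⟨+|. -/
def braPlus : Fin 2 → ℂ := fun a => star (ketPlus a)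

/-- The product state |+⟩^{⊗ι}. -/
def ketPlusAll (ι : Type*) [Fintype ι] : (ι → Fin 2) → ℂ := fun s => ∏ i, ketPlus (s i)

/-- Kronecker product of two vectors. -/
def kronVec {a b : Type*} (v : a → ℂ) (w : b → ℂ) : a × b → ℂ := fun p => v p.1 * w p.2

variable {ι : Type*} [Fintype ι] [DecidableEq ι]

/-- `op1 P i` acts as the one-qubit operator `P` on qubit `i` and as the identity elsewhere. -/
def op1 (P : Matrix (Fin 2) (Fin 2) ℂ) (i : ι) : Matrix (ι → Fin 2) (ι → Fin 2) ℂ :=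
  fun s t => P (s i) (t i) * ∏ j ∈ Finset.univ.erase i, (if s j = t j then (1 : ℂ) else 0)

/-- Controlled-Z gate between qubits `i` and `j` (identity elsewhere). -/
def cz2 (i j : ι) : Matrix (ι → Fin 2) (ι → Fin 2) ℂ :=
  Matrix.diagonal fun s => if s i = 1 ∧ s j = 1 then (-1 : ℂ) else 1

/-- The Z-rotation exp(iθ Z_i) on qubit `i`. -/
def rotZ (θ : ℝ) (i : ι) : Matrix (ι → Fin 2) (ι → Fin 2) ℂ :=
  NormedSpace.exp (((θ : ℂ) * Complex.I) • op1 Zg i)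

/-- The layer ∏_{i=1}^{N} H_i of Hadamards on every site of a ring of `N` qubits. -/
def hadamardLayer (N : ℕ) : MatQ N := (List.ofFn fun i : Fin N => op1 Hg i).prod

/-- The layer ∏_{i=1}^{N} CZ_{i,i+1} of controlled-Z gates on a ring of `N` qubits
(site indices mod `N`; the factors pairwise commute). -/
def czRing (N : ℕ) [NeZero N] : MatQ N := (List.ofFn fun i : Fin N => cz2 i (i + 1)).prod

/-- The layer ∏_{i=1}^{N} (√X)_i on a ring of `N` qubits. -/
def sqrtXLayer (N : ℕ) : MatQ N := (List.ofFn fun i : Fin N => op1 sqrtXg i).prod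

/-- The cluster CQCA T_c = (∏ H_i)·(∏ CZ_{i,i+1}) on a ring of `N` qubits. -/
def Tc (N : ℕ) [NeZero N] : MatQ N := hadamardLayer N * czRing N

/-- The periodic CQCA T̃_c = ∏ CZ_{i,i+1} on a ring of `N` qubits. -/
def Ttc (N : ℕ) [NeZero N] : MatQ N := czRing N

/-- The fractal CQCA T̂_c = (∏ H_i)·(∏ CZ_{i,i+1})·(∏ (√X)_i) on a ring of `N` qubits. -/
def Thc (N : ℕ) [NeZero N] : MatQ N := hadamardLayer N * czRing N * sqrtXLayer N

/-- Controlled-Z between input qubit `i` and output qubit `i` on a doubled register. -/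
def czIO {N : ℕ} (i : Fin N) : Matrix (QIdx N × QIdx N) (QIdx N × QIdx N) ℂ :=
  Matrix.diagonal fun p => if p.1 i = 1 ∧ p.2 i = 1 then (-1 : ℂ) else 1

/-- The unitary U_T = (1 ⊗ T)·(∏_i H_i^{(out)})·(∏_i CZ_{i,i}^{(in,out)}) of Eq. (16). -/
def UT {N : ℕ} (T : MatQ N) : Matrix (QIdx N × QIdx N) (QIdx N × QIdx N) ℂ :=
  ((1 : MatQ N) ⊗ₖ T) *
    (List.ofFn fun i : Fin N => (1 : MatQ N) ⊗ₖ op1 Hg i).prod *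
    (List.ofFn fun i : Fin N => czIO i).prod

/-- Contraction of the input register with the product bra `⊗_i bra i`. -/
def contractIn {N : ℕ} (bra : Fin N → Fin 2 → ℂ) (v : QIdx N × QIdx N → ℂ) : QIdx N → ℂ :=
  fun t => ∑ s : QIdx N, (∏ i, bra i (s i)) * v (s, t)

lemma diagonal_commute {α : Type*} [Fintype α] [DecidableEq α] (d e : α → ℂ) :
    Commute (Matrix.diagonal d) (Matrix.diagonal e) := by
  unfold Commute SemiconjBy
  have h : (fun i => d i * e i) = fun i => e i * d i := by funext x; ring
  rw [Matrix.diagonal_mul_diagonal, Matrix.diagonal_mul_diagonal, h]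

lemma Zg_eq_diagonal : Zg = Matrix.diagonal ![1, -1] := by
  ext i j
  fin_cases i <;> fin_cases j <;> simp [Zg, Matrix.diagonal]

lemma op1_diagonal (d : Fin 2 → ℂ) (i : ι) :
    op1 (Matrix.diagonal d) i = Matrix.diagonal (fun s => d (s i)) := by
  ext s t
  by_cases h : s = t
  · subst h
    simp [op1, Matrix.diagonal_apply_eq]
  · rw [Matrix.diagonal_apply_ne _ h]
    by_cases hi : s i = t i
    · obtain ⟨k, hk⟩ : ∃ k, s k ≠ t k := Function.ne_iff.mp h
      have hki : k ≠ i := by rintro rfl; exact hk hi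
      have h0 : (if s k = t k then (1 : ℂ) else 0) = 0 := by simp [hk]
      unfold op1
      rw [Finset.prod_eq_zero (Finset.mem_erase.mpr ⟨hki, Finset.mem_univ k⟩) h0]
      ring
    · unfold op1
      rw [Matrix.diagonal_apply_ne _ hi]
      ring

/-- The controlled-Z gate attached to an (undirected) edge `e`. -/
def czEdge {N : ℕ} (e : Sym2 (Fin N)) : MatQ N :=
  Matrix.diagonal fun s => if ∀ i ∈ e, s i = 1 then (-1 : ℂ) else 1

/-- The unitary ∏_{{i,j} ∈ E(G)} CZ_{i,j} preparing the graph state (the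
factors pairwise commute, so the product over the edge set is well defined). -/
def graphUnitary {N : ℕ} (G : SimpleGraph (Fin N)) [DecidableRel G.Adj] : MatQ N :=
  G.edgeFinset.noncommProd czEdge (by intro a _ b _ _; exact diagonal_commute _ _)

/-- The graph state |G⟩ = (∏_{{i,j} ∈ E(G)} CZ_{i,j}) |+⟩^{⊗N}. -/
def graphState {N : ℕ} (G : SimpleGraph (Fin N)) [DecidableRel G.Adj] : QIdx N → ℂ :=
  (graphUnitary G).mulVec (ketPlusAll (Fin N))

/-- The stabilizer generator K_v = X_v · ∏_{w ∈ N_G(v)} Z_w of the graph state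
(the Z factors pairwise commute, so the product is well defined). -/
def stabGen {N : ℕ} (G : SimpleGraph (Fin N)) [DecidableRel G.Adj] (v : Fin N) : MatQ N :=
  op1 Xg v *
    (G.neighborFinset v).noncommProd (fun w => op1 Zg w)
      (by
        intro a _ b _ _
        simp only [Function.onFun]
        rw [Zg_eq_diagonal, op1_diagonal, op1_diagonal]
        exact diagonal_commute _ _)


/-- The outer product |v⟩⟨v| of a vector with itself. -/
def outerProd {N : ℕ} (v : QIdx N → ℂ) : MatQ N :=
  Matrix.of fun s t => v s * star (v t)

/-! The graph unitary `U = ∏_{e ∈ E(G)} CZ_e` is the diagonal `±1` matrix `diag σ` with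
`σ s = ∏_{e ∈ E(G)} (-1)^[s = 1 on e]`, and flipping bit `v` of `s` multiplies `σ s` by
`∏_{w ∈ N(v)} (-1)^(s w)`. Hence `K_v = U X_v U`, so `a ↦ U X^a U`, with `X^a` the translation
`s ↦ s + a` of `(ℤ/2)^N`, is an injective homomorphism from `(ℤ/2)^N` onto `S_G`, and
`|S_G| = 2^N`. Since `∑_a X^a` is the all-ones matrix, `∑_{S ∈ S_G} S = U J U = σ σᵀ`, which is
`2^N |G⟩⟨G|` because `|G⟩ = 2^{-N/2} σ`. -/

section Translation

variable {Γ : Type*} [AddGroup Γ] [DecidableEq Γ]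

def translationMatrix (a : Γ) : Matrix Γ Γ ℂ :=
  Matrix.of fun s t => if t = s + a then 1 else 0

lemma translationMatrix_apply (a s t : Γ) :
    translationMatrix a s t = if t = s + a then 1 else 0 := rfl

lemma translationMatrix_zero : translationMatrix (0 : Γ) = 1 := by
  ext s t
  simp [translationMatrix_apply, Matrix.one_apply, eq_comm]

lemma translationMatrix_injective : Function.Injective (translationMatrix (Γ := Γ)) := by
  intro a b h
  simpa [translationMatrix_apply] using congrFun (congrFun h 0) a

variable [Fintype Γ]

lemma translationMatrix_add (a b : Γ) :
    translationMatrix (a + b) = translationMatrix a * translationMatrix b := by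
  ext s t
  rw [Matrix.mul_apply, Finset.sum_eq_single (s + a) (fun u _ hu => by
    simp [translationMatrix_apply, hu]) (by simp)]
  simp [translationMatrix_apply, add_assoc]

lemma sum_translationMatrix :
    ∑ a, translationMatrix a = Matrix.of fun _ _ : Γ => (1 : ℂ) := by
  ext s t
  rw [Matrix.sum_apply, Finset.sum_eq_single (-s + t) (fun a _ ha => by
    rw [translationMatrix_apply, if_neg]; rintro rfl; simp at ha) (by simp)]
  simp [translationMatrix_apply]

def translationHom : Multiplicative Γ →* Matrix Γ Γ ℂ where
  toFun a := translationMatrix a.toAdd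
  map_one' := translationMatrix_zero
  map_mul' a b := translationMatrix_add a.toAdd b.toAdd

end Translation

section Qubits

def zSign (b : Fin 2) : ℂ := if b = 1 then -1 else 1

lemma Xg_apply (a b : Fin 2) : Xg a b = if b = a + 1 then 1 else 0 := by
  fin_cases a <;> fin_cases b <;> simp [Xg]

lemma op1_Zg (i : ι) : op1 Zg i = diagonal fun s => zSign (s i) := by
  have : (![1, -1] : Fin 2 → ℂ) = zSign := by
    funext b; fin_cases b <;> simp [zSign]
  rw [Zg_eq_diagonal, op1_diagonal, this]

lemma op1_Xg (i : ι) : op1 Xg i = translationMatrix (Pi.single i 1) := by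
  ext s t
  simp only [op1, Xg_apply, Finset.prod_boole, ite_zero_mul_ite_zero, mul_one,
    translationMatrix_apply]
  refine if_congr ?_ rfl rfl
  simp only [Finset.mem_erase, Finset.mem_univ, and_true, funext_iff, Pi.add_apply,
    Pi.single_apply]
  constructor
  · rintro ⟨hi, hrest⟩ j
    by_cases hj : j = i
    · simp [hj, hi]
    · simp [hj, hrest j hj]
  · intro h
    refine ⟨by simpa using h i, fun j hj => ?_⟩
    simpa [hj] using (h j).symm

lemma closure_range_ofAdd_single :
    Subgroup.closure (Set.range fun i : ι => Multiplicative.ofAdd (Pi.single i (1 : Fin 2))) =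
      ⊤ := by
  rw [eq_top_iff]
  rintro a -
  rw [← ofAdd_toAdd a, ← Finset.univ_sum_single a.toAdd, ofAdd_sum]
  refine Subgroup.prod_mem _ fun i _ => ?_
  generalize a.toAdd i = b
  fin_cases b
  · simp
  · exact Subgroup.subset_closure ⟨i, rfl⟩

lemma noncommProd_diagonal {α : Type*} (s : Finset α) (d : α → ι → ℂ) (comm) :
    s.noncommProd (fun a => diagonal (d a)) comm = diagonal fun x => ∏ a ∈ s, d a x := by
  have h := Finset.map_noncommProd s d (fun a _ b _ _ => Commute.all _ _) (diagonalRingHom ι ℂ)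
  rw [Finset.noncommProd_eq_prod, Finset.prod_fn] at h
  exact h.symm

end Qubits

section GraphSign

variable {V : Type*} [Fintype V] [DecidableEq V]

def edgeSign (e : Sym2 V) (s : V → Fin 2) : ℂ := if ∀ i ∈ e, s i = 1 then -1 else 1

lemma edgeSign_mul_self (e : Sym2 V) (s : V → Fin 2) : edgeSign e s * edgeSign e s = 1 := by
  unfold edgeSign; split_ifs <;> norm_num

lemma star_edgeSign (e : Sym2 V) (s : V → Fin 2) : star (edgeSign e s) = edgeSign e s := by
  unfold edgeSign; split_ifs <;> simp

lemma edgeSign_add_single_of_notMem {e : Sym2 V} {v : V} (hv : v ∉ e) (s : V → Fin 2) :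
    edgeSign e (s + Pi.single v 1) = edgeSign e s := by
  have hagree : ∀ i ∈ e, (s + Pi.single v 1 : V → Fin 2) i = s i := fun i hi => by
    simp [show i ≠ v from fun h => hv (h ▸ hi)]
  simp only [edgeSign]
  exact if_congr (forall₂_congr fun i hi => by rw [hagree i hi]) rfl rfl

lemma edgeSign_mul_edgeSign_add_single {v w : V} (hvw : v ≠ w) (s : V → Fin 2) :
    edgeSign s(v, w) s * edgeSign s(v, w) (s + Pi.single v 1) = zSign (s w) := by
  simp only [edgeSign, Sym2.mem_iff, forall_eq_or_imp, forall_eq, Pi.add_apply,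
    Pi.single_eq_same, Pi.single_eq_of_ne hvw.symm, add_zero, zSign]
  generalize s v = a
  generalize s w = b
  fin_cases a <;> fin_cases b <;> simp

variable (G : SimpleGraph V) [DecidableRel G.Adj]

def graphSign (s : V → Fin 2) : ℂ := ∏ e ∈ G.edgeFinset, edgeSign e s

lemma graphSign_mul_self (s : V → Fin 2) : graphSign G s * graphSign G s = 1 := by
  rw [graphSign, ← Finset.prod_mul_distrib]
  exact Finset.prod_eq_one fun e _ => edgeSign_mul_self e s

lemma star_graphSign (s : V → Fin 2) : star (graphSign G s) = graphSign G s := by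
  rw [graphSign, star_prod]
  exact Finset.prod_congr rfl fun e _ => star_edgeSign e s

lemma graphSign_mul_graphSign_add_single (s : V → Fin 2) (v : V) :
    graphSign G s * graphSign G (s + Pi.single v 1) = ∏ w ∈ G.neighborFinset v, zSign (s w) := by
  have hinj : Set.InjOn (fun w => s(v, w)) (G.neighborFinset v) :=
    fun _ _ _ _ h => Sym2.congr_right.mp h
  have hsub : (G.neighborFinset v).image (fun w => s(v, w)) ⊆ G.edgeFinset := by
    intro e he
    obtain ⟨w, hw, rfl⟩ := Finset.mem_image.mp he
    simpa using hw
  have hrest : ∀ e ∈ G.edgeFinset, e ∉ (G.neighborFinset v).image (fun w => s(v, w)) →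
      edgeSign e s * edgeSign e (s + Pi.single v 1) = 1 := by
    intro e he hne
    have hv : v ∉ e := by
      intro hv
      refine hne (Finset.mem_image.mpr ⟨Sym2.Mem.other hv, ?_, Sym2.other_spec hv⟩)
      rw [SimpleGraph.mem_neighborFinset, ← SimpleGraph.mem_edgeSet, Sym2.other_spec hv]
      simpa using he
    rw [edgeSign_add_single_of_notMem hv, edgeSign_mul_self]
  rw [graphSign, graphSign, ← Finset.prod_mul_distrib, ← Finset.prod_subset hsub hrest,
    Finset.prod_image hinj]
  exact Finset.prod_congr rfl fun w hw =>
    edgeSign_mul_edgeSign_add_single (G.ne_of_adj ((G.mem_neighborFinset v w).mp hw)) s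

end GraphSign

section GraphState

-- The two sides decide `∀ i ∈ e, s i = 1` through different `Decidable` instances.
lemma czEdge_eq_diagonal_edgeSign {N : ℕ} (e : Sym2 (Fin N)) :
    czEdge e = diagonal (edgeSign e) := by
  unfold czEdge edgeSign
  congr!

variable {N : ℕ} (G : SimpleGraph (Fin N)) [DecidableRel G.Adj]

lemma graphUnitary_eq_diagonal : graphUnitary G = diagonal (graphSign G) :=
  (Finset.noncommProd_congr rfl (fun e _ => czEdge_eq_diagonal_edgeSign e) _).trans
    (noncommProd_diagonal _ _ _)

lemma graphUnitary_mul_self : graphUnitary G * graphUnitary G = 1 := by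
  rw [graphUnitary_eq_diagonal, diagonal_mul_diagonal, ← diagonal_one]
  exact congrArg diagonal (funext (graphSign_mul_self G))

lemma stabGen_eq_graphUnitary_mul_op1_Xg_mul_graphUnitary (v : Fin N) :
    stabGen G v = graphUnitary G * op1 Xg v * graphUnitary G := by
  have hZ : stabGen G v = op1 Xg v * diagonal fun s => ∏ w ∈ G.neighborFinset v, zSign (s w) :=
    congrArg (op1 Xg v * ·) ((Finset.noncommProd_congr rfl (fun w _ => op1_Zg w) _).trans
      (noncommProd_diagonal _ (fun w (s : QIdx N) => zSign (s w)) _))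
  ext s t
  simp only [hZ, graphUnitary_eq_diagonal, op1_Xg, mul_diagonal, diagonal_mul,
    translationMatrix_apply]
  split_ifs with h
  · subst h
    rw [one_mul, mul_one, graphSign_mul_graphSign_add_single]
    refine Finset.prod_congr rfl fun w hw => ?_
    rw [Pi.add_apply, Pi.single_eq_of_ne (G.ne_of_adj ((G.mem_neighborFinset v w).mp hw)).symm,
      add_zero]
  · simp

def graphUnitaryGL : GL (QIdx N) ℂ :=
  ⟨graphUnitary G, graphUnitary G, graphUnitary_mul_self G, graphUnitary_mul_self G⟩

def stabilizerHom : Multiplicative (QIdx N) →* GL (QIdx N) ℂ :=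
  (MulAut.conj (graphUnitaryGL G)).toMonoidHom.comp translationHom.toHomUnits

lemma coe_stabilizerHom (a : Multiplicative (QIdx N)) :
    (stabilizerHom G a : MatQ N) = graphUnitary G * translationMatrix a.toAdd * graphUnitary G :=
  rfl

lemma stabilizerHom_injective : Function.Injective (stabilizerHom G) := by
  intro a b h
  have h' := congrArg Units.val ((MulAut.conj (graphUnitaryGL G)).injective h)
  exact Multiplicative.toAdd.injective (translationMatrix_injective h')

lemma closure_stabGen_eq_range :
    Subgroup.closure {g : GL (QIdx N) ℂ | ∃ v : Fin N, (g : MatQ N) = stabGen G v} =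
      (stabilizerHom G).range := by
  have hgen : {g : GL (QIdx N) ℂ | ∃ v : Fin N, (g : MatQ N) = stabGen G v} =
      stabilizerHom G '' Set.range fun v => Multiplicative.ofAdd (Pi.single v 1) := by
    rw [← Set.range_comp]
    ext g
    simp [Units.ext_iff, coe_stabilizerHom, stabGen_eq_graphUnitary_mul_op1_Xg_mul_graphUnitary,
      op1_Xg, eq_comm]
  rw [hgen, ← MonoidHom.map_closure, closure_range_ofAdd_single, MonoidHom.range_eq_map]

lemma sum_stabilizerHom :
    ∑ a, (stabilizerHom G a : MatQ N) = vecMulVec (graphSign G) (graphSign G) := by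
  simp_rw [coe_stabilizerHom]
  rw [← Finset.sum_mul, ← Finset.mul_sum,
    Fintype.sum_equiv Multiplicative.toAdd _ translationMatrix fun _ => rfl,
    sum_translationMatrix, graphUnitary_eq_diagonal]
  ext s t
  simp [vecMulVec_apply, mul_diagonal, diagonal_mul]

lemma outerProd_graphState :
    outerProd (graphState G) = ((2 : ℂ) ^ N)⁻¹ • vecMulVec (graphSign G) (graphSign G) := by
  have hsqrt : ((Real.sqrt 2 : ℂ)⁻¹ * (Real.sqrt 2 : ℂ)⁻¹) = 2⁻¹ := by
    rw [← mul_inv, ← Complex.ofReal_mul, Real.mul_self_sqrt zero_le_two, Complex.ofReal_ofNat]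
  ext s t
  simp only [outerProd, graphState, graphUnitary_eq_diagonal, mulVec_diagonal, ketPlusAll,
    ketPlus, Finset.prod_const, Finset.card_univ, Fintype.card_fin, of_apply, Matrix.smul_apply,
    vecMulVec_apply, smul_eq_mul, star_mul', star_graphSign, star_pow, star_inv₀,
    Complex.star_def, Complex.conj_ofReal]
  rw [← inv_pow, ← hsqrt, mul_pow]
  ring

end GraphState

/-- the stabilizer group `S_G` generated (inside the group of invertible
`2^N × 2^N` matrices) by the stabilizer generators `K_v` has exactly `2^N` elements, and
`|G⟩⟨G| = 2^{-N} ∑_{S ∈ S_G} S`. -/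
theorem stabilizer_group_card_and_projector {N : ℕ} (G : SimpleGraph (Fin N))
    [DecidableRel G.Adj] :
    Nat.card ↥(Subgroup.closure
        {g : Matrix.GeneralLinearGroup (QIdx N) ℂ | ∃ v : Fin N, (g : MatQ N) = stabGen G v})
      = 2 ^ N ∧
    outerProd (graphState G) =
      ((2 : ℂ) ^ N)⁻¹ •
        ∑ᶠ g ∈ (↑(Subgroup.closure
            {g : Matrix.GeneralLinearGroup (QIdx N) ℂ | ∃ v : Fin N, (g : MatQ N) = stabGen G v})
            : Set (Matrix.GeneralLinearGroup (QIdx N) ℂ)),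
          (g : MatQ N) := by
  rw [closure_stabGen_eq_range]
  constructor
  · rw [Nat.card_congr (MonoidHom.ofInjective (stabilizerHom_injective G)).toEquiv.symm]
    simp [Nat.card_eq_fintype_card]
  · rw [MonoidHom.coe_range, finsum_mem_range (stabilizerHom_injective G),
      finsum_eq_sum_of_fintype, sum_stabilizerHom, outerProd_graphState]

end QCA

end
end

section
/- The square of the cluster CQCA produces the three-body entangling generator used in the universal gate set of CAQC: for a ring of N ≥ 3 qubits and every site i, T_c² Z_i (T_c²)† = X_{i-1} Z_i X_{i+1} (indices mod N); consequently, for every θ ∈ ℝ, T_c² · exp(iθ Z_i) · (T_c²)† = exp(iθ · X_{i-1} Z_i X_{i+1}). -/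
/-!
Write `T_c = H C` with `H = ⊗ⱼ Hⱼ` and `C = ∏ₖ CZ_{k,k+1}`; both are self-adjoint involutions, so
`T_c` is unitary and `T_c² A (T_c²)† = H C H C A C H C H`. Conjugation by `H` exchanges `X` and `Z`
site by site. Conjugation by the diagonal `C` fixes `Z_i` and sends `X_i` to `Z_{i-1} Z_{i+1} X_i`,
because flipping bit `i` multiplies the CZ phase of the ring by the signs of bits `i - 1` and
`i + 1`. Hence `Z_i ↦ Z_i ↦ X_i ↦ Z_{i-1} Z_{i+1} X_i ↦ X_{i-1} X_{i+1} Z_i`, and the exponential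
identity follows because conjugation by a unitary commutes with `exp`.
-/

open Matrix Complex
open scoped Kronecker Classical

noncomputable section

theorem List.prod_ofFn_mulSingle {M : Type*} [Monoid M] {n : ℕ} (x : Fin n → M) :
    (List.ofFn fun i => Pi.mulSingle i (x i)).prod = x := by
  conv_rhs => rw [← Finset.noncommProd_mulSingle x]
  simp only [Finset.noncommProd, Fin.univ_val_map, Multiset.noncommProd_coe]

theorem mul_mul_mul_of_mul_self_eq_one {M : Type*} [Monoid M] {u : M} (hu : u * u = 1)
    (a b : M) : u * (a * b) * u = u * a * u * (u * b * u) := by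
  simp only [mul_assoc, ← mul_assoc u u, hu, one_mul]

theorem mem_unitary_of_star_eq_of_mul_self_eq_one {R : Type*} [Monoid R] [StarMul R] {U : R}
    (hstar : star U = U) (hU : U * U = 1) : U ∈ unitary R :=
  Unitary.mem_iff.mpr ⟨by rw [hstar, hU], by rw [hstar, hU]⟩

theorem Matrix.exp_conj_of_mem_unitary {m 𝔸 : Type*} [Fintype m] [DecidableEq m]
    [NormedCommRing 𝔸] [NormedAlgebra ℚ 𝔸] [CompleteSpace 𝔸] [StarRing 𝔸]
    {U : Matrix m m 𝔸} (hU : U ∈ unitary (Matrix m m 𝔸)) (A : Matrix m m 𝔸) :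
    NormedSpace.exp (U * A * star U) = U * NormedSpace.exp A * star U := by
  rw [← inv_eq_right_inv (Unitary.mul_star_self_of_mem hU)]
  exact exp_conj U A (Unitary.isUnit_coe (U := ⟨U, hU⟩))

namespace QCA

section piKron

variable {ι κ R : Type*} [Fintype ι] [CommSemiring R]

def piKron (M : ι → Matrix κ κ R) : Matrix (ι → κ) (ι → κ) R :=
  Matrix.of fun s t => ∏ j, M j (s j) (t j)

lemma piKron_apply (M : ι → Matrix κ κ R) (s t : ι → κ) :
    piKron M s t = ∏ j, M j (s j) (t j) := rfl

lemma piKron_mul [DecidableEq ι] [Fintype κ] (A B : ι → Matrix κ κ R) :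
    piKron A * piKron B = piKron (A * B) := by
  ext s t
  simp only [mul_apply, piKron_apply, Pi.mul_apply, ← Finset.prod_mul_distrib]
  exact (Fintype.prod_sum fun j a => A j (s j) a * B j a (t j)).symm

lemma piKron_one [DecidableEq ι] [DecidableEq κ] : piKron (1 : ι → Matrix κ κ R) = 1 := by
  ext s t
  by_cases hst : s = t
  · simp [piKron_apply, hst, one_apply]
  · obtain ⟨j, hj⟩ := Function.ne_iff.mp hst
    rw [piKron_apply, one_apply_ne hst]
    exact Finset.prod_eq_zero (Finset.mem_univ j) (one_apply_ne hj)

lemma piKron_conjTranspose [StarRing R] (M : ι → Matrix κ κ R) :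
    (piKron M)ᴴ = piKron fun j => (M j)ᴴ := by
  ext s t
  simp [piKron_apply, conjTranspose_apply]

def piKronHom [DecidableEq ι] [Fintype κ] [DecidableEq κ] :
    (ι → Matrix κ κ R) →* Matrix (ι → κ) (ι → κ) R where
  toFun := piKron
  map_one' := piKron_one
  map_mul' A B := (piKron_mul A B).symm

end piKron

section op1

variable {ι : Type*} [Fintype ι] [DecidableEq ι]

lemma op1_eq_piKron (P : Matrix (Fin 2) (Fin 2) ℂ) (i : ι) :
    op1 P i = piKron (Pi.mulSingle i P) := by
  ext s t
  rw [piKron_apply, ← Finset.mul_prod_erase _ _ (Finset.mem_univ i), op1, Pi.mulSingle_eq_same]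
  congr 1
  refine Finset.prod_congr rfl fun j hj => ?_
  rw [Pi.mulSingle_eq_of_ne (Finset.ne_of_mem_erase hj), one_apply]

lemma op1_commute {i j : ι} (hij : i ≠ j) (P Q : Matrix (Fin 2) (Fin 2) ℂ) :
    Commute (op1 P i) (op1 Q j) := by
  rw [op1_eq_piKron, op1_eq_piKron]
  exact (Pi.mulSingle_commute hij P Q).map piKronHom

lemma op1_Xg_apply (i : ι) (s t : ι → Fin 2) :
    op1 Xg i s t = if t = Function.update s i (s i + 1) then 1 else 0 := by
  have hX : ∀ a b : Fin 2, Xg a b = if b = a + 1 then 1 else 0 := by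
    intro a b; fin_cases a <;> fin_cases b <;> simp [Xg]
  rw [op1, hX, Finset.prod_boole, ite_zero_mul_ite_zero, mul_one]
  simp only [Function.eq_update_iff, Finset.mem_erase, Finset.mem_univ, and_true,
    eq_comm (a := s _)]

lemma op1_Xg_mul_diagonal (i : ι) (e : (ι → Fin 2) → ℂ) :
    op1 Xg i * diagonal e = diagonal (fun s => e (Function.update s i (s i + 1))) * op1 Xg i := by
  ext s t
  rw [mul_diagonal, diagonal_mul, op1_Xg_apply]
  split_ifs with h
  · rw [h, one_mul, mul_one]
  · rw [zero_mul, mul_zero]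

end op1

lemma Hg_mul_Hg : Hg * Hg = 1 := by
  ext a b
  fin_cases a <;> fin_cases b <;>
    simp [Hg, mul_apply, Fin.sum_univ_two, one_apply] <;> ring_nf <;> simp [← ofReal_pow]

lemma Hg_mul_Zg_mul_Hg : Hg * Zg * Hg = Xg := by
  ext a b
  fin_cases a <;> fin_cases b <;>
    simp [Hg, Zg, Xg, mul_apply, Fin.sum_univ_two] <;> ring_nf <;> simp [← ofReal_pow]

lemma Hg_mul_Xg_mul_Hg : Hg * Xg * Hg = Zg := by
  ext a b
  fin_cases a <;> fin_cases b <;>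
    simp [Hg, Zg, Xg, mul_apply, Fin.sum_univ_two] <;> ring_nf <;> simp [← ofReal_pow]

lemma Hg_conjTranspose : Hgᴴ = Hg := by
  ext a b
  fin_cases a <;> fin_cases b <;> simp [Hg, conjTranspose_apply]

section layers

variable (N : ℕ)

lemma hadamardLayer_eq_piKron : hadamardLayer N = piKron fun _ => Hg := by
  calc hadamardLayer N = (List.ofFn fun i : Fin N => piKronHom (Pi.mulSingle i Hg)).prod := by
        simp only [hadamardLayer, op1_eq_piKron]; rfl
    _ = piKronHom (List.ofFn fun i : Fin N => Pi.mulSingle i Hg).prod := by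
        rw [map_list_prod, List.map_ofFn]; rfl
    _ = piKron fun _ => Hg := by
        rw [List.prod_ofFn_mulSingle fun _ => Hg]; rfl

lemma hadamardLayer_mul_self : hadamardLayer N * hadamardLayer N = 1 := by
  rw [hadamardLayer_eq_piKron, piKron_mul, ← piKron_one]
  exact congrArg piKron (funext fun _ => Hg_mul_Hg)

lemma hadamardLayer_conjTranspose : (hadamardLayer N)ᴴ = hadamardLayer N := by
  rw [hadamardLayer_eq_piKron, piKron_conjTranspose, Hg_conjTranspose]

lemma hadamardLayer_conj_op1 (P : Matrix (Fin 2) (Fin 2) ℂ) (i : Fin N) :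
    hadamardLayer N * op1 P i * hadamardLayer N = op1 (Hg * P * Hg) i := by
  rw [hadamardLayer_eq_piKron, op1_eq_piKron, op1_eq_piKron, piKron_mul, piKron_mul]
  refine congrArg piKron (funext fun j => ?_)
  rcases eq_or_ne j i with rfl | hj
  · simp
  · simp [Pi.mulSingle_eq_of_ne hj, Hg_mul_Hg]

def czPhase (a b : Fin 2) : ℂ := if a = 1 ∧ b = 1 then -1 else 1

lemma czPhase_mul_self (a b : Fin 2) : czPhase a b * czPhase a b = 1 := by
  fin_cases a <;> fin_cases b <;> simp [czPhase]

lemma czPhase_mul_czPhase_add_one_left (a b : Fin 2) :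
    czPhase a b * czPhase (a + 1) b = ![1, -1] b := by
  fin_cases a <;> fin_cases b <;> simp [czPhase]

lemma czPhase_mul_czPhase_add_one_right (a b : Fin 2) :
    czPhase a b * czPhase a (b + 1) = ![1, -1] a := by
  fin_cases a <;> fin_cases b <;> simp [czPhase]

lemma star_czPhase (a b : Fin 2) : star (czPhase a b) = czPhase a b := by
  fin_cases a <;> fin_cases b <;> simp [czPhase]

variable [NeZero N]

def czRingPhase (s : QIdx N) : ℂ := ∏ k, czPhase (s k) (s (k + 1))

lemma czRing_eq_diagonal : czRing N = diagonal (czRingPhase N) := by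
  calc czRing N = (List.ofFn fun k : Fin N =>
        diagonalRingHom (QIdx N) ℂ fun s => czPhase (s k) (s (k + 1))).prod := rfl
    _ = diagonalRingHom (QIdx N) ℂ (List.ofFn fun k : Fin N =>
        fun s : QIdx N => czPhase (s k) (s (k + 1))).prod := by
        rw [map_list_prod, List.map_ofFn]; rfl
    _ = diagonal (czRingPhase N) := by
        rw [List.prod_ofFn]
        exact congrArg diagonal (funext fun s => Finset.prod_apply _ _ _)

lemma czRing_mul_self : czRing N * czRing N = 1 := by
  rw [czRing_eq_diagonal, diagonal_mul_diagonal, ← diagonal_one]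
  refine congrArg diagonal (funext fun s => ?_)
  simp only [czRingPhase, ← Finset.prod_mul_distrib, czPhase_mul_self, Finset.prod_const_one]

lemma czRing_conjTranspose : (czRing N)ᴴ = czRing N := by
  rw [czRing_eq_diagonal, diagonal_conjTranspose]
  exact congrArg diagonal (funext fun s => by simp [czRingPhase, star_czPhase])

variable {N}

lemma czRingPhase_mul_czRingPhase_flip (hN : 2 ≤ N) (i : Fin N) (s : QIdx N) :
    czRingPhase N s * czRingPhase N (Function.update s i (s i + 1)) =
      ![1, -1] (s (i - 1)) * ![1, -1] (s (i + 1)) := by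
  have hsub : i - 1 ≠ i := by rw [Ne, sub_eq_self, Fin.one_eq_zero_iff]; omega
  have hadd : i + 1 ≠ i := by rw [Ne, add_eq_left, Fin.one_eq_zero_iff]; omega
  -- flipping bit `i` only changes the phases of the edges `(i - 1, i)` and `(i, i + 1)`
  rw [czRingPhase, czRingPhase, ← Finset.prod_mul_distrib, Fintype.prod_eq_mul (i - 1) i hsub]
  · simp only [Function.update_of_ne hsub, Function.update_of_ne hadd, sub_add_cancel,
      Function.update_self, czPhase_mul_czPhase_add_one_left, czPhase_mul_czPhase_add_one_right]
  · rintro k ⟨hk1, hk2⟩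
    have hk : k + 1 ≠ i := fun h => hk1 (eq_sub_of_add_eq h)
    rw [Function.update_of_ne hk2, Function.update_of_ne hk, czPhase_mul_self]

lemma czRing_commute_op1_Zg (i : Fin N) : Commute (czRing N) (op1 Zg i) := by
  rw [czRing_eq_diagonal, Zg_eq_diagonal, op1_diagonal]
  exact diagonal_commute _ _

lemma czRing_conj_op1_Zg (i : Fin N) : czRing N * op1 Zg i * czRing N = op1 Zg i := by
  rw [(czRing_commute_op1_Zg i).eq, mul_assoc, czRing_mul_self, mul_one]

lemma czRing_conj_op1_Xg (hN : 2 ≤ N) (i : Fin N) :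
    czRing N * op1 Xg i * czRing N = op1 Zg (i - 1) * op1 Zg (i + 1) * op1 Xg i := by
  rw [mul_assoc, czRing_eq_diagonal, op1_Xg_mul_diagonal, ← mul_assoc, diagonal_mul_diagonal,
    Zg_eq_diagonal, op1_diagonal, op1_diagonal, diagonal_mul_diagonal]
  exact congrArg (diagonal · * op1 Xg i) (funext (czRingPhase_mul_czRingPhase_flip hN i))

lemma Tc_conjTranspose : (Tc N)ᴴ = czRing N * hadamardLayer N := by
  rw [Tc, conjTranspose_mul, czRing_conjTranspose, hadamardLayer_conjTranspose]

lemma Tc_mem_unitary : Tc N ∈ unitary (MatQ N) :=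
  mul_mem
    (mem_unitary_of_star_eq_of_mul_self_eq_one (hadamardLayer_conjTranspose N)
      (hadamardLayer_mul_self N))
    (mem_unitary_of_star_eq_of_mul_self_eq_one (czRing_conjTranspose N) (czRing_mul_self N))

lemma Tc_sq_conj_op1_Zg (hN : 2 ≤ N) (i : Fin N) :
    Tc N ^ 2 * op1 Zg i * (Tc N ^ 2)ᴴ = op1 Xg (i - 1) * op1 Zg i * op1 Xg (i + 1) := by
  set H := hadamardLayer N
  set C := czRing N
  have hH : H * H = 1 := hadamardLayer_mul_self N
  have hadd : i + 1 ≠ i := by rw [Ne, add_eq_left, Fin.one_eq_zero_iff]; omega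
  calc Tc N ^ 2 * op1 Zg i * (Tc N ^ 2)ᴴ
      = H * (C * (H * (C * op1 Zg i * C) * H) * C) * H := by
        rw [conjTranspose_pow, Tc_conjTranspose, Tc]; noncomm_ring
    _ = H * (op1 Zg (i - 1) * op1 Zg (i + 1) * op1 Xg i) * H := by
        rw [czRing_conj_op1_Zg, hadamardLayer_conj_op1, Hg_mul_Zg_mul_Hg, czRing_conj_op1_Xg hN]
    _ = op1 Xg (i - 1) * op1 Xg (i + 1) * op1 Zg i := by
        rw [mul_mul_mul_of_mul_self_eq_one hH, mul_mul_mul_of_mul_self_eq_one hH,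
          hadamardLayer_conj_op1, hadamardLayer_conj_op1, hadamardLayer_conj_op1,
          Hg_mul_Zg_mul_Hg, Hg_mul_Xg_mul_Hg]
    _ = op1 Xg (i - 1) * op1 Zg i * op1 Xg (i + 1) := by
        rw [mul_assoc, (op1_commute hadd _ _).eq, ← mul_assoc]

end layers

/-- `T_c² Z_i (T_c²)† = X_{i-1} Z_i X_{i+1}`, and consequently
`T_c² exp(iθZ_i) (T_c²)† = exp(iθ X_{i-1} Z_i X_{i+1})` for every θ. -/
theorem cluster_cqca_squared {N : ℕ} [NeZero N] (hN : 3 ≤ N) (i : Fin N) :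
    Tc N ^ 2 * op1 Zg i * (Tc N ^ 2)ᴴ = op1 Xg (i - 1) * op1 Zg i * op1 Xg (i + 1) ∧
    ∀ θ : ℝ,
      Tc N ^ 2 * NormedSpace.exp (((θ : ℂ) * Complex.I) • op1 Zg i) * (Tc N ^ 2)ᴴ =
        NormedSpace.exp
          (((θ : ℂ) * Complex.I) • (op1 Xg (i - 1) * op1 Zg i * op1 Xg (i + 1))) := by
  have hconj := Tc_sq_conj_op1_Zg (by omega) i
  refine ⟨hconj, fun θ => ?_⟩
  rw [← hconj, ← star_eq_conjTranspose, ← smul_mul_assoc, ← mul_smul_comm,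
    exp_conj_of_mem_unitary (pow_mem Tc_mem_unitary 2)]

end QCA

end
end
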